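/- arXiv:1407.8069 — 3 statements merged into one kernel-verified Lean document; each statement's English description precedes it below -/
import Mathlib

section
/- Let F be a field, Q(x,y) a bivariate polynomial over F interpolating n points (x_i, h_i) ∈ F² with multiplicity r (i.e., Q(x + x_i, y + h_i) has no monomial of total degree < r), and let g = v/w be a rational function with w(x_i) ≠ 0 and v(x_i)/w(x_i) = h_i for all i in a subset I ⊆ {1,…,n}. If deg(v) ≤ V, deg(w) ≤ W, and deg_{1,V−W}(Q) + W·deg_y(Q) < r·|I|, and the x_i for i ∈ I are distinct, then Q(x, g(x)) = 0 as a rational function. -/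
/-!
Let `d = deg_y Q` and `P = w^d Q(x, v/w) = ∑_j Q_j v^j w^(d-j) ∈ F[x]`, the degree-`d`
homogenization of `Q` evaluated at `(v, w)`; it suffices to show `P = 0`. Each summand has degree
at most `deg Q_j + (V - W) j + W d ≤ D + W d < r |I|`. Translating `y` by `h_i` acts on the
homogenization as `(Y₀, Y₁) ↦ (Y₀ + h_i Y₁, Y₁)`, so
`P(x + x_i) = ∑_b R_b (v' - h_i w')^b w'^(d-b)`, where `R = Q(x + x_i, y + h_i)` and `v', w'`
are `v, w` translated by `x_i`. Since `x^(r-b) ∣ R_b` and `x ∣ v' - h_i w'`, every term is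
divisible by `x^r`. So `P` has a root of multiplicity `r` at each
of the `|I|` distinct points `x_i`, which its degree only allows if `P = 0`.
-/

open Polynomial

/-- The bivariate polynomial `Q(x + x₀, y + y₀)`, where a bivariate polynomial is
represented as an element of `F[x][y]` (outer variable `y`, coefficients in `F[x]`). -/
noncomputable def shiftBivar {F : Type*} [Field F]
    (Q : Polynomial (Polynomial F)) (x₀ y₀ : F) : Polynomial (Polynomial F) :=
  (Q.map ((Polynomial.aeval (Polynomial.X + Polynomial.C x₀)).toRingHom :
      Polynomial F →+* Polynomial F)).comp
    (Polynomial.X + Polynomial.C (Polynomial.C y₀))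

/-- `Q` passes through `(x₀, y₀)` with multiplicity (at least) `r`:
the shift of `Q` to that point has no monomial of total degree `< r`. -/
def PassesWithMult {F : Type*} [Field F]
    (Q : Polynomial (Polynomial F)) (x₀ y₀ : F) (r : ℕ) : Prop :=
  ∀ a b : ℕ, a + b < r → ((shiftBivar Q x₀ y₀).coeff b).coeff a = 0

namespace Polynomial

open Finset

section Homogenize

variable {R : Type*} [CommSemiring R]

lemma eval_homogenize_eq_sum (p : R[X]) (n : ℕ) (s t : R) :
    MvPolynomial.eval ![s, t] (p.homogenize n) =
      ∑ kl ∈ antidiagonal n, p.coeff kl.1 * s ^ kl.1 * t ^ kl.2 := by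
  simp only [homogenize, map_sum, MvPolynomial.eval_monomial]
  refine Finset.sum_congr rfl fun kl _ => ?_
  rw [Finsupp.update_eq_add_single (by simp),
    Finsupp.prod_add_index' (by simp) (by simp [pow_add]),
    Finsupp.prod_single_index (by simp), Finsupp.prod_single_index (by simp)]
  simp [mul_assoc]

lemma map_eval_homogenize {S : Type*} [CommSemiring S] (f : R →+* S) (p : R[X]) (n : ℕ)
    (s t : R) :
    f (MvPolynomial.eval ![s, t] (p.homogenize n)) =
      MvPolynomial.eval ![f s, f t] ((p.map f).homogenize n) := by
  rw [homogenize_map, MvPolynomial.eval_map, MvPolynomial.eval, MvPolynomial.coe_eval₂Hom,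
    MvPolynomial.eval₂_comp_left]
  congr 1
  ext i
  fin_cases i <;> rfl

lemma eval₂_div_eq_zero_of_eval_homogenize_eq_zero {K : Type*} [Semifield K] (f : R →+* K)
    {p : R[X]} {n : ℕ} (hn : p.natDegree ≤ n) {s t : R} (ht : f t ≠ 0)
    (h : MvPolynomial.eval ![s, t] (p.homogenize n) = 0) :
    p.eval₂ f (f s / f t) = 0 := by
  have hf := congrArg f h
  rw [map_eval_homogenize, map_zero,
    eval_homogenize (natDegree_map_le.trans hn) _ (by simpa using ht)] at hf
  simpa [eval_map, ht] using hf

lemma homogenize_taylor {p : R[X]} {n : ℕ} (hn : p.natDegree ≤ n) (c : R) :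
    (taylor c p).homogenize n =
      MvPolynomial.bind₁ ![MvPolynomial.X 0 + MvPolynomial.C c * MvPolynomial.X 1,
        MvPolynomial.X 1] (p.homogenize n) := by
  apply homogenize_eq_of_isHomogeneous
  · have hlinear (i : Fin 2) : (![MvPolynomial.X 0 + MvPolynomial.C c * MvPolynomial.X 1,
        MvPolynomial.X 1] i : MvPolynomial (Fin 2) R).IsHomogeneous 1 := by
      fin_cases i
      · exact (MvPolynomial.isHomogeneous_X _ _).add ((MvPolynomial.isHomogeneous_X _ _).C_mul _)
      · exact MvPolynomial.isHomogeneous_X _ _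
    convert (isHomogeneous_homogenize (n := n) p).aeval _ hlinear using 1
    · rfl
    · rw [one_mul]
  · rw [MvPolynomial.aeval_bind₁, aeval_homogenize_of_eq_one hn _ (by simp), taylor_apply,
      comp_eq_aeval]
    simp

lemma eval_homogenize_taylor {p : R[X]} {n : ℕ} (hn : p.natDegree ≤ n) (c s t : R) :
    MvPolynomial.eval ![s, t] ((taylor c p).homogenize n) =
      MvPolynomial.eval ![s + c * t, t] (p.homogenize n) := by
  rw [homogenize_taylor hn, MvPolynomial.eval, MvPolynomial.eval₂Hom_bind₁]
  congr 2
  ext i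
  fin_cases i <;> simp [mul_comm]

lemma pow_dvd_eval_homogenize {p : R[X]} {a s : R} {r : ℕ} (hs : a ∣ s)
    (hp : ∀ k < r, a ^ (r - k) ∣ p.coeff k) (n : ℕ) (t : R) :
    a ^ r ∣ MvPolynomial.eval ![s, t] (p.homogenize n) := by
  rw [eval_homogenize_eq_sum]
  refine Finset.dvd_sum fun ⟨k, l⟩ _ => dvd_mul_of_dvd_left ?_ _
  rcases le_or_gt r k with hrk | hkr
  · exact dvd_mul_of_dvd_right ((pow_dvd_pow a hrk).trans (pow_dvd_pow_of_dvd hs k)) _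
  · rw [← Nat.sub_add_cancel hkr.le, pow_add]
    exact mul_dvd_mul (hp k hkr) (pow_dvd_pow_of_dvd hs k)

lemma natDegree_eval_homogenize_le {p : R[X][X]} {s t : R[X]} {V W : ℕ} {D : ℤ}
    (hs : s.natDegree ≤ V) (ht : t.natDegree ≤ W)
    (hp : ∀ j, p.coeff j ≠ 0 → ((p.coeff j).natDegree : ℤ) + ((V : ℤ) - W) * j ≤ D) {n : ℕ}
    (h0 : MvPolynomial.eval ![s, t] (p.homogenize n) ≠ 0) :
    ((MvPolynomial.eval ![s, t] (p.homogenize n)).natDegree : ℤ) ≤ D + W * n := by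
  set P := MvPolynomial.eval ![s, t] (p.homogenize n)
  obtain ⟨⟨k, l⟩, hkl, hterm⟩ : ∃ kl ∈ antidiagonal n,
      (p.coeff kl.1 * s ^ kl.1 * t ^ kl.2).coeff P.natDegree ≠ 0 := by
    apply Finset.exists_ne_zero_of_sum_ne_zero
    rw [← finsetSum_coeff, ← eval_homogenize_eq_sum]
    exact mt leadingCoeff_eq_zero.1 h0
  rw [HasAntidiagonal.mem_antidiagonal] at hkl
  subst hkl
  have hk : p.coeff k ≠ 0 := fun h => hterm (by simp [h])
  have hdeg : P.natDegree ≤ (p.coeff k).natDegree + k * V + l * W :=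
    calc P.natDegree ≤ (p.coeff k * s ^ k * t ^ l).natDegree := le_natDegree_of_ne_zero hterm
      _ ≤ (p.coeff k).natDegree + k * V + l * W :=
        natDegree_mul_le_of_le (natDegree_mul_le_of_le le_rfl (natDegree_pow_le_of_le k hs))
          (natDegree_pow_le_of_le l ht)
  have hkD := hp k hk
  push_cast
  zify at hdeg
  linarith

end Homogenize

lemma X_sub_C_pow_dvd_of_X_pow_dvd_taylor {R : Type*} [CommRing R] {p : R[X]} {c : R} {r : ℕ}
    (h : X ^ r ∣ taylor c p) : (X - C c) ^ r ∣ p := by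
  simpa [taylor_taylor, sub_eq_add_neg] using _root_.map_dvd (taylorAlgHom (-c)) h

lemma mul_card_le_natDegree_of_X_sub_C_pow_dvd {R : Type*} [CommRing R] [IsDomain R]
    [DecidableEq R] {p : R[X]} (hp : p ≠ 0) {s : Finset R} {r : ℕ}
    (h : ∀ a ∈ s, (X - C a) ^ r ∣ p) : r * s.card ≤ p.natDegree :=
  calc r * s.card = Multiset.card (r • s.val) := by simp
    _ ≤ Multiset.card p.roots := Multiset.card_le_card <| Multiset.le_iff_count.2 fun a => by
        rw [Multiset.count_nsmul, count_roots]
        by_cases ha : a ∈ s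
        · rw [Multiset.count_eq_one_of_mem s.nodup ha, mul_one]
          exact (le_rootMultiplicity_iff hp).2 (h a ha)
        · simp [Multiset.count_eq_zero.2 ha]
    _ ≤ p.natDegree := card_roots' p

end Polynomial

lemma shiftBivar_eq_taylor_map_taylor {F : Type*} [Field F] (Q : F[X][X]) (x₀ y₀ : F) :
    shiftBivar Q x₀ y₀ = taylor (C y₀) (Q.map (taylorAlgHom x₀).toRingHom) := by
  rw [shiftBivar, taylor_apply]
  rfl

lemma PassesWithMult.X_sub_C_pow_dvd_eval_homogenize {F : Type*} [Field F] {Q : F[X][X]}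
    {x₀ y₀ : F} {r : ℕ} (hQ : PassesWithMult Q x₀ y₀ r) {v w : F[X]}
    (hvw : v.eval x₀ = y₀ * w.eval x₀) {n : ℕ} (hn : Q.natDegree ≤ n) :
    (X - C x₀) ^ r ∣ MvPolynomial.eval ![v, w] (Q.homogenize n) := by
  set τ : F[X] →+* F[X] := (taylorAlgHom x₀).toRingHom
  have hmap : Q.map τ = taylor (-C y₀) (shiftBivar Q x₀ y₀) := by
    rw [shiftBivar_eq_taylor_map_taylor, taylor_taylor, neg_add_cancel, taylor_zero]
  have hdeg : (shiftBivar Q x₀ y₀).natDegree ≤ n := by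
    rw [shiftBivar_eq_taylor_map_taylor, natDegree_taylor]
    exact natDegree_map_le.trans hn
  have hshift : taylor x₀ (MvPolynomial.eval ![v, w] (Q.homogenize n)) =
      MvPolynomial.eval ![taylor x₀ (v - C y₀ * w), taylor x₀ w]
        ((shiftBivar Q x₀ y₀).homogenize n) := by
    change τ _ = MvPolynomial.eval ![τ _, τ _] _
    rw [map_eval_homogenize, hmap, eval_homogenize_taylor hdeg]
    simp [τ, sub_eq_add_neg]
  apply X_sub_C_pow_dvd_of_X_pow_dvd_taylor
  rw [hshift]
  refine pow_dvd_eval_homogenize ?_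
    (fun k hk => X_pow_dvd_iff.2 fun a ha => hQ a k (by omega)) _ _
  rw [X_dvd_iff, taylor_coeff_zero]
  simp [hvw]

theorem rational_interpolation_vanishing_general {F : Type*} [Field F]
    (Q : Polynomial (Polynomial F)) (n : ℕ) (x h : Fin n → F)
    (r : ℕ) (hinterp : ∀ i, PassesWithMult Q (x i) (h i) r)
    (I : Finset (Fin n)) (hxinj : Set.InjOn x (I : Set (Fin n)))
    (v w : Polynomial F)
    (hgI : ∀ i ∈ I, v.eval (x i) = h i * w.eval (x i))
    (V W : ℕ) (hv : v.natDegree ≤ V) (hw : w ≠ 0) (hwd : w.natDegree ≤ W)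
    (D : ℤ)
    (hwdeg : ∀ j, Q.coeff j ≠ 0 →
      ((Q.coeff j).natDegree : ℤ) + ((V : ℤ) - (W : ℤ)) * j ≤ D)
    (hlt : D + (W : ℤ) * Q.natDegree < (r : ℤ) * I.card) :
    Polynomial.eval₂ (algebraMap (Polynomial F) (RatFunc F))
      (algebraMap (Polynomial F) (RatFunc F) v /
        algebraMap (Polynomial F) (RatFunc F) w) Q = 0 := by
  classical
  set P := MvPolynomial.eval ![v, w] (Q.homogenize Q.natDegree)
  suffices hP : P = 0 from
    eval₂_div_eq_zero_of_eval_homogenize_eq_zero _ le_rfl (RatFunc.algebraMap_ne_zero hw) hP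
  by_contra hP
  have hroots : ∀ a ∈ I.image x, (X - C a) ^ r ∣ P := by
    simp only [Finset.forall_mem_image]
    exact fun i hi => (hinterp i).X_sub_C_pow_dvd_eval_homogenize (hgI i hi) le_rfl
  have hlower := mul_card_le_natDegree_of_X_sub_C_pow_dvd hP hroots
  rw [Finset.card_image_of_injOn hxinj] at hlower
  have hupper := natDegree_eval_homogenize_le hv hwd hwdeg hP
  zify at hlower
  linarith

theorem rational_interpolation_vanishing {F : Type*} [Field F]
    (Q : Polynomial (Polynomial F)) (n : ℕ) (x h : Fin n → F)
    (r : ℕ) (hinterp : ∀ i, PassesWithMult Q (x i) (h i) r)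
    (I : Finset (Fin n)) (hxinj : Set.InjOn x (I : Set (Fin n)))
    (v w : Polynomial F)
    (hwI : ∀ i ∈ I, w.eval (x i) ≠ 0)
    (hgI : ∀ i ∈ I, v.eval (x i) = h i * w.eval (x i))
    (V W : ℕ) (hv : v.natDegree ≤ V) (hw : w ≠ 0) (hwd : w.natDegree ≤ W)
    (D : ℤ)
    (hwdeg : ∀ j, Q.coeff j ≠ 0 →
      ((Q.coeff j).natDegree : ℤ) + ((V : ℤ) - (W : ℤ)) * j ≤ D)
    (hlt : D + (W : ℤ) * Q.natDegree < (r : ℤ) * I.card) :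
    Polynomial.eval₂ (algebraMap (Polynomial F) (RatFunc F))
      (algebraMap (Polynomial F) (RatFunc F) v /
        algebraMap (Polynomial F) (RatFunc F) w) Q = 0 :=
  rational_interpolation_vanishing_general Q n x h r hinterp I hxinj v w hgI V W hv hw hwd D hwdeg
    hlt
end

section
/- Let F be a field and let C, D_Y be positive integers and m ≥ 0 an integer with m·D_Y·(D_Y + 1)/2 ≤ C + 1. Consider bivariate polynomials Q(x,y) = Σ_{j=0}^{D_Y} q_j(x)·y^j. If a homogeneous linear system of C equations in the coefficients of Q is imposed, then there exists a nonzero Q with deg_y(Q) ≤ D_Y satisfying all C equations and with (1, m)-weighted degree deg_{1,m}(Q) ≤ D, where D = ⌈(C + 1)/(D_Y + 1)⌉ − 1 + m·D_Y (more precisely: the number of monomials x^a y^b with b ≤ D_Y and a + m·b ≤ D is (D+1)(D_Y+1) − m·D_Y(D_Y+1)/2 when D ≥ m·D_Y, and if this count exceeds C then a nonzero solution exists). -/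
/-!
The weighted box `{(a, b) : b ≤ DY, a + m * b ≤ D}` contains the rectangle `[0, q) × [0, DY]` with
`q = ⌈(C + 1) / (DY + 1)⌉`, so it has more than `C` elements. Hence the `C` functionals, restricted
to the polynomials supported on the box, have a common nonzero zero.
-/

open Finset Module

theorem LinearMap.exists_ne_zero_mem_forall_eq_zero_of_card_lt_finrank {K V ι : Type*}
    [DivisionRing K] [AddCommGroup V] [Module K V] [Fintype ι] (W : Submodule K V)
    [FiniteDimensional K W] (L : ι → V →ₗ[K] K) (h : Fintype.card ι < finrank K W) :
    ∃ v ∈ W, v ≠ 0 ∧ ∀ i, L i v = 0 := by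
  let f : W →ₗ[K] ι → K := LinearMap.pi fun i => L i ∘ₗ W.subtype
  obtain ⟨w, hw, hw0⟩ := Submodule.ne_bot_iff _ |>.mp <|
    f.ker_ne_bot_of_finrank_lt (by rwa [finrank_fintype_fun_eq_card])
  exact ⟨w, w.2, by simpa using hw0, fun i => congr_fun hw i⟩

theorem Finsupp.exists_ne_zero_support_subset_forall_eq_zero {K α ι : Type*} [DivisionRing K]
    [Fintype ι] (s : Finset α) (L : ι → (α →₀ K) →ₗ[K] K) (h : Fintype.card ι < #s) :
    ∃ Q : α →₀ K, Q ≠ 0 ∧ (∀ i, L i Q = 0) ∧ Q.support ⊆ s := by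
  let e := Finsupp.supportedEquivFinsupp (M := K) (R := K) (s : Set α)
  have : FiniteDimensional K (supported K K (s : Set α)) := e.symm.finiteDimensional
  obtain ⟨Q, hQs, hQ0, hQL⟩ := LinearMap.exists_ne_zero_mem_forall_eq_zero_of_card_lt_finrank
    (supported K K (s : Set α)) L
    (by simpa [e.finrank_eq] using h)
  exact ⟨Q, hQ0, hQL, coe_subset.mp ((mem_supported K Q).mp hQs)⟩

/-- `(a, b)` stands for the monomial `x ^ a * y ^ b`. -/
def weightedMonomials (DY m D : ℕ) : Finset (ℕ × ℕ) :=
  (range (D + 1) ×ˢ range (DY + 1)).filter fun p => p.1 + m * p.2 ≤ D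

theorem mem_weightedMonomials {DY m D : ℕ} {p : ℕ × ℕ} :
    p ∈ weightedMonomials DY m D ↔ p.2 ≤ DY ∧ p.1 + m * p.2 ≤ D := by
  simp only [weightedMonomials, mem_filter, mem_product, mem_range]
  omega

theorem card_weightedMonomials_eq_sum (DY m D : ℕ) :
    #(weightedMonomials DY m D) = ∑ b ∈ range (DY + 1), (D + 1 - m * b) := by
  rw [weightedMonomials, card_filter, sum_product_right]
  refine sum_congr rfl fun b _ => ?_
  rw [← card_filter, ← card_range (D + 1 - m * b)]
  congr 1
  ext a
  simp only [mem_filter, mem_range]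
  omega

theorem card_weightedMonomials {DY m D : ℕ} (h : m * DY ≤ D) :
    #(weightedMonomials DY m D) = (D + 1) * (DY + 1) - m * DY * (DY + 1) / 2 := by
  have hgauss : m * DY * (DY + 1) / 2 = m * ∑ b ∈ range (DY + 1), b := by
    have hsum : (∑ b ∈ range (DY + 1), b) * 2 = (DY + 1) * DY := sum_range_id_mul_two (DY + 1)
    exact Nat.div_eq_of_eq_mul_left two_pos (by rw [mul_assoc m _ 2, hsum]; ring)
  have hle : ∀ b ∈ range (DY + 1), m * b ≤ D + 1 := fun b hb =>
    (Nat.mul_le_mul_left m (mem_range_succ_iff.mp hb)).trans (h.trans D.le_succ)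
  rw [card_weightedMonomials_eq_sum, sum_tsub_distrib _ hle, sum_const, card_range, smul_eq_mul,
    ← mul_sum, hgauss, mul_comm]

theorem range_product_subset_weightedMonomials (DY m q : ℕ) :
    range q ×ˢ range (DY + 1) ⊆ weightedMonomials DY m (q - 1 + m * DY) := by
  intro p hp
  rw [mem_product, mem_range, mem_range] at hp
  have := Nat.mul_le_mul_left m (Nat.lt_succ_iff.mp hp.2)
  rw [mem_weightedMonomials]
  omega

theorem exists_nonzero_interpolating_polynomial_general {F : Type*} [Field F]
    (C DY : ℕ) (m : ℕ)
    (D : ℕ) (hD : D = (C + 1 + DY) / (DY + 1) - 1 + m * DY) :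
    (∀ D' : ℕ, m * DY ≤ D' →
      (((Finset.range (D' + 1)) ×ˢ (Finset.range (DY + 1))).filter
          (fun p => p.1 + m * p.2 ≤ D')).card =
        (D' + 1) * (DY + 1) - m * DY * (DY + 1) / 2) ∧
    ∀ L : Fin C → ((ℕ × ℕ →₀ F) →ₗ[F] F),
      ∃ Q : ℕ × ℕ →₀ F, Q ≠ 0 ∧ (∀ i, L i Q = 0) ∧
        ∀ p ∈ Q.support, p.2 ≤ DY ∧ p.1 + m * p.2 ≤ D := by
  refine ⟨fun D' h => card_weightedMonomials h, fun L => ?_⟩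
  have hceil := Nat.lt_div_mul_add (a := C + 1 + DY) (b := DY + 1) (by omega)
  set q := (C + 1 + DY) / (DY + 1)
  have hCq : C < #(range q ×ˢ range (DY + 1)) := by
    rw [card_product, card_range, card_range]
    omega
  obtain ⟨Q, hQ0, hQL, hQs⟩ := Finsupp.exists_ne_zero_support_subset_forall_eq_zero
    (weightedMonomials DY m D) L <| by
      rw [Fintype.card_fin, hD]
      exact hCq.trans_le (card_le_card (range_product_subset_weightedMonomials DY m q))
  exact ⟨Q, hQ0, hQL, fun p hp => mem_weightedMonomials.mp (hQs hp)⟩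

theorem exists_nonzero_interpolating_polynomial {F : Type*} [Field F]
    (C DY : ℕ) (hC : 0 < C) (hDY : 0 < DY) (m : ℕ)
    (hm : m * DY * (DY + 1) / 2 ≤ C + 1)
    (D : ℕ) (hD : D = (C + 1 + DY) / (DY + 1) - 1 + m * DY) :
    (∀ D' : ℕ, m * DY ≤ D' →
      (((Finset.range (D' + 1)) ×ˢ (Finset.range (DY + 1))).filter
          (fun p => p.1 + m * p.2 ≤ D')).card =
        (D' + 1) * (DY + 1) - m * DY * (DY + 1) / 2) ∧
    ∀ L : Fin C → ((ℕ × ℕ →₀ F) →ₗ[F] F),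
      ∃ Q : ℕ × ℕ →₀ F, Q ≠ 0 ∧ (∀ i, L i Q = 0) ∧
        ∀ p ∈ Q.support, p.2 ≤ DY ∧ p.1 + m * p.2 ≤ D :=
  exists_nonzero_interpolating_polynomial_general C DY m D hD
end

section
/- With notation as in the Forney formula setup: let Λ(x) = Π_{i∈I}(1 − α^i x) be the error locator of an error pattern e with support I over GF(q), n = q−1, and let Ω satisfy Λ·E = Ω·(1 − x^n) where E is the Fourier transform of e. Then for each i ∈ I, the error value satisfies e_i = −E(α^{−i}) = −Ω(α^{−i}) / (α^{−i}·Λ′(α^{−i})), where Λ′ is the formal derivative. -/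
open Polynomial Finset

/-!
Write `γₖ = α^(k+1)` and `β = γᵢ⁻¹`. Since `α` is a primitive `n`-th root of unity, the `γₖ` are
distinct `n`-th roots of unity, so evaluating `E` at `β` sums the geometric series of `γₖ β` over a
full period: only `k = i` survives, and `E(β) = n·eᵢ = -eᵢ` because `n = q - 1 = -1` in `F`.
For the second formula, differentiate the key equation `Λ E = Ω (1 - Xⁿ)` and evaluate at `β`,
which is a root of both `Λ` and `1 - Xⁿ`; it is a simple root of `Λ` because the `γₖ` are distinct.
-/

theorem isPrimitiveRoot_card_sub_one_of_forall_eq_pow {F : Type*} [Field F] [Fintype F] {α : F}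
    (hα0 : α ≠ 0) (hα : ∀ x : F, x ≠ 0 → ∃ k : ℕ, α ^ k = x) :
    IsPrimitiveRoot α (Fintype.card F - 1) := by
  classical
  have hgen : ∀ u : Fˣ, u ∈ Submonoid.powers (Units.mk0 α hα0) := fun u => by
    obtain ⟨k, hk⟩ := hα u u.ne_zero
    exact ⟨k, Units.ext (by simpa using hk)⟩
  rw [IsPrimitiveRoot.iff_orderOf, ← Fintype.card_units, ← Nat.card_eq_fintype_card,
    ← orderOf_eq_card_of_forall_mem_powers hgen]
  exact orderOf_units (y := Units.mk0 α hα0)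

theorem FiniteField.cast_card_sub_one (F : Type*) [Field F] [Fintype F] :
    ((Fintype.card F - 1 : ℕ) : F) = -1 := by
  rw [Nat.cast_sub Fintype.card_pos, FiniteField.cast_card_eq_zero, Nat.cast_one, zero_sub]

theorem IsPrimitiveRoot.injective_pow_succ {M : Type*} [CommMonoidWithZero M] [Nontrivial M]
    [IsRightCancelMulZero M] {α : M} {n : ℕ} (h : IsPrimitiveRoot α n) :
    Function.Injective fun k : Fin n => α ^ ((k : ℕ) + 1) := fun k l hkl =>
  Fin.ext <| h.pow_inj k.2 l.2 <|
    mul_right_cancel₀ (h.ne_zero k.pos.ne') (by simpa only [pow_succ] using hkl)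

theorem geom_sum_eq_zero_of_pow_eq_one {K : Type*} [DivisionRing K] {z : K} {n : ℕ} (hz : z ^ n = 1)
    (hz1 : z ≠ 1) : ∑ j ∈ range n, z ^ j = 0 := by
  rw [geom_sum_eq hz1, hz, sub_self, zero_div]

theorem eval_sum_C_sum_mul_pow {R ι : Type*} [CommSemiring R] [Fintype ι] (e γ : ι → R) (n : ℕ)
    (x : R) :
    (∑ j ∈ range n, C (∑ k, e k * γ k ^ j) * X ^ j).eval x =
      ∑ k, e k * ∑ j ∈ range n, (γ k * x) ^ j := by
  simp only [eval_finsetSum, eval_mul, eval_C, eval_pow, eval_X, sum_mul, mul_sum, mul_pow,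
    mul_assoc]
  exact sum_comm

theorem eval_inv_sum_C_sum_mul_pow {K ι : Type*} [Field K] [Fintype ι] {γ : ι → K} {n : ℕ}
    (hγ : Function.Injective γ) (hγn : ∀ k, γ k ^ n = 1) (e : ι → K) {i : ι} (hi : γ i ≠ 0) :
    (∑ j ∈ range n, C (∑ k, e k * γ k ^ j) * X ^ j).eval (γ i)⁻¹ = n * e i := by
  rw [eval_sum_C_sum_mul_pow, sum_eq_single i]
  · simp [mul_inv_cancel₀ hi, mul_comm]
  · intro k _ hk
    rw [geom_sum_eq_zero_of_pow_eq_one, mul_zero]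
    · rw [mul_pow, inv_pow, hγn, hγn, inv_one, mul_one]
    · rw [Ne, mul_inv_eq_one₀ hi]
      exact hγ.ne hk
  · simp

theorem eval_derivative_prod_one_sub_C_mul_X {R ι : Type*} [CommRing R] [DecidableEq ι]
    {s : Finset ι} {a : ι → R} {i : ι} (hi : i ∈ s) {b : R} (hb : a i * b = 1) :
    (derivative (∏ k ∈ s, (1 - C (a k) * X))).eval b = -a i * ∏ k ∈ s.erase i, (1 - a k * b) := by
  rw [← mul_prod_erase s _ hi, derivative_mul]
  simp [eval_prod, hb]

theorem eval_derivative_prod_one_sub_C_mul_X_ne_zero {K ι : Type*} [Field K] [DecidableEq ι]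
    {s : Finset ι} {a : ι → K} (ha : Set.InjOn a s) {i : ι} (hi : i ∈ s) (hai : a i ≠ 0) :
    (derivative (∏ k ∈ s, (1 - C (a k) * X))).eval (a i)⁻¹ ≠ 0 := by
  rw [eval_derivative_prod_one_sub_C_mul_X hi (mul_inv_cancel₀ hai)]
  refine mul_ne_zero (neg_ne_zero.2 hai) (prod_ne_zero_iff.2 fun k hk => ?_)
  rw [sub_ne_zero, ne_comm, Ne, mul_inv_eq_one₀ hai]
  exact fun h => ne_of_mem_erase hk (ha (mem_of_mem_erase hk) hi h)

theorem eval_derivative_one_sub_X_pow_of_pow_eq_one {K : Type*} [Field K] {β : K} {n : ℕ}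
    (hn : n ≠ 0) (hβ : β ^ n = 1) : (derivative (1 - X ^ n : K[X])).eval β = -n * β⁻¹ := by
  have hβ0 : β ≠ 0 := fun h => by simp [h, hn] at hβ
  rw [derivative_sub, derivative_one, derivative_X_pow, zero_sub, eval_neg, eval_mul, eval_C,
    eval_pow, eval_X, pow_sub₀ (n := 1) β hβ0 (Nat.one_le_iff_ne_zero.2 hn), hβ, pow_one, one_mul,
    neg_mul]

theorem eval_derivative_mul_eval_of_mul_eq {R : Type*} [CommSemiring R] {Λ E Ω G : R[X]}
    (h : Λ * E = Ω * G) {b : R} (hΛ : Λ.eval b = 0) (hG : G.eval b = 0) :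
    (derivative Λ).eval b * E.eval b = Ω.eval b * (derivative G).eval b := by
  simpa [derivative_mul, hΛ, hG] using congrArg (fun p => (derivative p).eval b) h

theorem forney_formula_general {F : Type*} [Field F] [Fintype F]
    (α : F) (hα0 : α ≠ 0) (hα : ∀ x : F, x ≠ 0 → ∃ k : ℕ, α ^ k = x)
    (n : ℕ) (hn : n = Fintype.card F - 1)
    (e : Fin n → F) (I : Finset (Fin n))
    (E Λ Ω : Polynomial F)
    (hE : E = ∑ j ∈ Finset.range n,
      Polynomial.C (∑ i : Fin n, e i * α ^ (((i : ℕ) + 1) * j)) * Polynomial.X ^ j)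
    (hΛ : Λ = ∏ i ∈ I, (1 - Polynomial.C (α ^ ((i : ℕ) + 1)) * Polynomial.X))
    (hkey : Λ * E = Ω * (1 - Polynomial.X ^ n)) :
    ∀ i ∈ I,
      e i = -E.eval (α⁻¹ ^ ((i : ℕ) + 1)) ∧
      e i = -Ω.eval (α⁻¹ ^ ((i : ℕ) + 1)) /
        (α⁻¹ ^ ((i : ℕ) + 1) *
          (Polynomial.derivative Λ).eval (α⁻¹ ^ ((i : ℕ) + 1))) := by
  intro i hi
  have hprim : IsPrimitiveRoot α n := hn ▸ isPrimitiveRoot_card_sub_one_of_forall_eq_pow hα0 hα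
  have hnF : (n : F) = -1 := hn ▸ FiniteField.cast_card_sub_one F
  let γ : Fin n → F := fun k => α ^ ((k : ℕ) + 1)
  have hγ0 : γ i ≠ 0 := pow_ne_zero _ hα0
  have hγn : ∀ k, γ k ^ n = 1 := fun k => by rw [pow_right_comm, hprim.pow_eq_one, one_pow]
  rw [inv_pow]
  change e i = -E.eval (γ i)⁻¹ ∧ e i = -Ω.eval (γ i)⁻¹ / ((γ i)⁻¹ * (derivative Λ).eval (γ i)⁻¹)
  have hEβ : E.eval (γ i)⁻¹ = -e i := by
    simp_rw [hE, pow_mul]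
    rw [eval_inv_sum_C_sum_mul_pow hprim.injective_pow_succ hγn e hγ0, hnF, neg_one_mul]
  have hΛβ : Λ.eval (γ i)⁻¹ = 0 := by
    rw [hΛ, eval_prod]
    exact prod_eq_zero hi (by simp [γ, mul_inv_cancel₀ hγ0])
  have hΛ'β : (derivative Λ).eval (γ i)⁻¹ ≠ 0 := hΛ ▸
    eval_derivative_prod_one_sub_C_mul_X_ne_zero hprim.injective_pow_succ.injOn hi hγ0
  have hβn : (γ i)⁻¹ ^ n = 1 := by rw [inv_pow, hγn, inv_one]
  have hderiv := eval_derivative_mul_eval_of_mul_eq hkey hΛβ (by simp [hβn])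
  rw [hEβ, eval_derivative_one_sub_X_pow_of_pow_eq_one i.pos.ne' hβn, hnF, inv_inv] at hderiv
  refine ⟨by rw [hEβ, neg_neg], ?_⟩
  rw [eq_div_iff (mul_ne_zero (inv_ne_zero hγ0) hΛ'β)]
  linear_combination (-(γ i)⁻¹) * hderiv - Ω.eval (γ i)⁻¹ * mul_inv_cancel₀ hγ0

theorem forney_formula {F : Type*} [Field F] [Fintype F]
    (α : F) (hα0 : α ≠ 0) (hα : ∀ x : F, x ≠ 0 → ∃ k : ℕ, α ^ k = x)
    (n : ℕ) (hn : n = Fintype.card F - 1)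
    (e : Fin n → F) (I : Finset (Fin n)) (hI : ∀ i, e i ≠ 0 ↔ i ∈ I)
    (E Λ Ω : Polynomial F)
    (hE : E = ∑ j ∈ Finset.range n,
      Polynomial.C (∑ i : Fin n, e i * α ^ (((i : ℕ) + 1) * j)) * Polynomial.X ^ j)
    (hΛ : Λ = ∏ i ∈ I, (1 - Polynomial.C (α ^ ((i : ℕ) + 1)) * Polynomial.X))
    (hΩdeg : Ω.degree < Λ.degree)
    (hkey : Λ * E = Ω * (1 - Polynomial.X ^ n)) :
    ∀ i ∈ I,
      e i = -E.eval (α⁻¹ ^ ((i : ℕ) + 1)) ∧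
      e i = -Ω.eval (α⁻¹ ^ ((i : ℕ) + 1)) /
        (α⁻¹ ^ ((i : ℕ) + 1) *
          (Polynomial.derivative Λ).eval (α⁻¹ ^ ((i : ℕ) + 1))) :=
  forney_formula_general α hα0 hα n hn e I E Λ Ω hE hΛ hkey
end
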